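/- arXiv:1606.03336 — 3 statements merged into one kernel-verified Lean document; each statement's English description precedes it below -/
import Mathlib

section
/- For 0 < β < 1, the residual R(t) = x''(t) + (1-(x'(t))²)^{3/2} x(t) of x(t) = β(1-β²)^{-3/4} sin((1-β²)^{3/4} t) satisfies R(t)/t → 0 as t → 0 and R'(0) = 0. -/
theorem stmt_11 (β : ℝ) (hβ0 : 0 < β) (hβ1 : β < 1)
    (x R : ℝ → ℝ)
    (hx : ∀ t, x t = β * (1 - β ^ 2) ^ (-(3 : ℝ) / 4) *
      Real.sin ((1 - β ^ 2) ^ ((3 : ℝ) / 4) * t))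
    (hR : ∀ t, R t = deriv (deriv x) t + (1 - (deriv x t) ^ 2) ^ ((3 : ℝ) / 2) * x t) :
    Filter.Tendsto (fun t => R t / t) (nhdsWithin 0 {0}ᶜ) (nhds 0) ∧ deriv R 0 = 0 := by
  set b : ℝ := 1 - β ^ 2 with hbdef
  have hb : 0 < b := by nlinarith
  set ω : ℝ := b ^ ((3:ℝ)/4) with hωdef
  set A : ℝ := β * b ^ (-(3:ℝ)/4) with hAdef
  have hAω : A * ω = β := by
    rw [hAdef, hωdef, mul_assoc, ← Real.rpow_add hb]
    norm_num
  have hωω : ω * ω = b ^ ((3:ℝ)/2) := by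
    rw [hωdef, ← Real.rpow_add hb]; norm_num
  have hxf : x = fun t => A * Real.sin (ω * t) := funext hx
  have hid : ∀ t : ℝ, HasDerivAt (fun t : ℝ => ω * t) ω t := by
    intro t; simpa using (hasDerivAt_id t).const_mul ω
  have hd1 : ∀ t, HasDerivAt x (β * Real.cos (ω * t)) t := by
    intro t
    have h3 := ((Real.hasDerivAt_sin (ω * t)).comp t (hid t)).const_mul A
    rw [hxf]
    refine h3.congr_deriv ?_
    rw [← hAω]; ring
  have hdx : deriv x = fun t => β * Real.cos (ω * t) := funext fun t => (hd1 t).deriv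
  have hd2 : ∀ t, HasDerivAt (deriv x) (-(β * ω) * Real.sin (ω * t)) t := by
    intro t
    rw [hdx]
    have h3 := ((Real.hasDerivAt_cos (ω * t)).comp t (hid t)).const_mul β
    refine h3.congr_deriv ?_; ring
  have hddx : deriv (deriv x) = fun t => -(β * ω) * Real.sin (ω * t) :=
    funext fun t => (hd2 t).deriv
  have hRf : R = fun t => -(β * ω) * Real.sin (ω * t)
      + (1 - (β * Real.cos (ω * t)) ^ 2) ^ ((3:ℝ)/2) * (A * Real.sin (ω * t)) := by
    funext t
    rw [hR t, hddx, hdx, hxf]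
  have hR0v : R 0 = 0 := by rw [hRf]; simp
  -- derivative pieces at 0
  have hcos : HasDerivAt (fun t : ℝ => Real.cos (ω * t)) (-Real.sin (ω * 0) * ω) 0 :=
    (Real.hasDerivAt_cos (ω * 0)).comp 0 (hid 0)
  have hu : HasDerivAt (fun t : ℝ => 1 - (β * Real.cos (ω * t)) ^ 2)
      (-((2:ℕ) * (β * Real.cos (ω * 0)) ^ (2 - 1) * (β * (-Real.sin (ω * 0) * ω)))) 0 :=
    ((hcos.const_mul β).pow 2).const_sub 1
  have hrp := hu.rpow_const (p := (3:ℝ)/2) (Or.inr (by norm_num))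
  have hsin : HasDerivAt (fun t : ℝ => A * Real.sin (ω * t)) (A * (Real.cos (ω * 0) * ω)) 0 :=
    ((Real.hasDerivAt_sin (ω * 0)).comp 0 (hid 0)).const_mul A
  have hfirst : HasDerivAt (fun t : ℝ => -(β * ω) * Real.sin (ω * t))
      (-(β * ω) * (Real.cos (ω * 0) * ω)) 0 :=
    ((Real.hasDerivAt_sin (ω * 0)).comp 0 (hid 0)).const_mul (-(β * ω))
  have hder : HasDerivAt R 0 0 := by
    rw [hRf]
    refine (hfirst.add (hrp.mul hsin)).congr_deriv ?_
    simp only [mul_zero, Real.sin_zero, Real.cos_zero]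
    rw [show (1 : ℝ) - (β * 1) ^ 2 = b by rw [hbdef]; ring]
    simp only [one_mul, zero_add]
    rw [hAω, ← hωω]
    ring
  constructor
  · have h := hasDerivAt_iff_tendsto_slope.mp hder
    refine h.congr fun t => ?_
    simp [slope_def_field, hR0v]
  · exact hder.deriv
end

section
/- Let x: ℝ → ℝ be twice differentiable with |x'(t)| < 1 for all t, satisfying x'' + (1-(x')²)^{3/2} x = 0 with x(0) = 0 and x'(0) = β where 0 < β < 1. Then for all t, x(t)²/2 ≤ (1-β²)^{-1/2} - 1, so |x(t)| ≤ √(2((1-β²)^{-1/2} - 1)). -/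
theorem stmt_13 (β : ℝ) (hβ0 : 0 < β) (hβ1 : β < 1) (x : ℝ → ℝ)
    (hdiff : ∀ t, DifferentiableAt ℝ x t ∧ DifferentiableAt ℝ (deriv x) t)
    (hv : ∀ t, |deriv x t| < 1)
    (heq : ∀ t, deriv (deriv x) t + (1 - (deriv x t) ^ 2) ^ ((3 : ℝ) / 2) * x t = 0)
    (h0 : x 0 = 0) (h0' : deriv x 0 = β) (t : ℝ) :
    x t ^ 2 / 2 ≤ (1 - β ^ 2) ^ (-(1 : ℝ) / 2) - 1 ∧
      |x t| ≤ Real.sqrt (2 * ((1 - β ^ 2) ^ (-(1 : ℝ) / 2) - 1)) := by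
  set E : ℝ → ℝ := fun s => (1 - (deriv x s) ^ 2) ^ (-(1 : ℝ) / 2) + x s ^ 2 / 2 with hE_def
  have hpos : ∀ s, 0 < 1 - (deriv x s) ^ 2 := by
    intro s
    have := hv s
    nlinarith [sq_abs (deriv x s), abs_nonneg (deriv x s)]
  have hE : ∀ s, HasDerivAt E 0 s := by
    intro s
    have hx := (hdiff s).1.hasDerivAt
    have hv' := (hdiff s).2.hasDerivAt
    have h1 : HasDerivAt (fun u => 1 - (deriv x u) ^ 2)
        (0 - 2 * deriv x s ^ 1 * deriv (deriv x) s) s :=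
      (hasDerivAt_const s (1 : ℝ)).sub (hv'.pow 2)
    have h2 := h1.rpow_const (p := -(1 : ℝ) / 2) (Or.inl (hpos s).ne')
    have h3 : HasDerivAt (fun u => x u ^ 2 / 2) (x s * deriv x s) s := by
      have := (hx.pow 2).div_const 2
      refine this.congr_deriv ?_
      ring
    have htot := h2.add h3
    have hode : deriv (deriv x) s = -((1 - (deriv x s) ^ 2) ^ ((3 : ℝ) / 2) * x s) := by
      linarith [heq s]
    have key : (1 - (deriv x s) ^ 2) ^ ((3 : ℝ) / 2) *
        (1 - (deriv x s) ^ 2) ^ (-(1 : ℝ) / 2 - 1) = 1 := by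
      rw [← Real.rpow_add (hpos s)]
      norm_num
    refine htot.congr_deriv ?_
    rw [hode]
    linear_combination (-(deriv x s * x s)) * key
  have hconst : ∀ s, E s = E 0 := fun s =>
    is_const_of_deriv_eq_zero (fun u => (hE u).differentiableAt) (fun u => (hE u).deriv) s 0
  have hE0 : E 0 = (1 - β ^ 2) ^ (-(1 : ℝ) / 2) := by
    simp [hE_def, h0, h0']
  have hge1 : (1 : ℝ) ≤ (1 - (deriv x t) ^ 2) ^ (-(1 : ℝ) / 2) := by
    apply Real.one_le_rpow_of_pos_of_le_one_of_nonpos (hpos t)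
    · nlinarith [sq_nonneg (deriv x t)]
    · norm_num
  have hEt := hconst t
  rw [hE0] at hEt
  have h1 : x t ^ 2 / 2 ≤ (1 - β ^ 2) ^ (-(1 : ℝ) / 2) - 1 := by
    have : (1 - (deriv x t) ^ 2) ^ (-(1 : ℝ) / 2) + x t ^ 2 / 2
        = (1 - β ^ 2) ^ (-(1 : ℝ) / 2) := hEt
    linarith
  refine ⟨h1, ?_⟩
  calc |x t| = Real.sqrt (x t ^ 2) := (Real.sqrt_sq_eq_abs _).symm
    _ ≤ Real.sqrt (2 * ((1 - β ^ 2) ^ (-(1 : ℝ) / 2) - 1)) :=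
        Real.sqrt_le_sqrt (by linarith)
end

section
/- For a twice differentiable x: ℝ → ℝ with |x'| < 1 solving x'' + (1-(x')²)^{3/2} x = 0, x(0)=0, x'(0)=β, 0<β<1, one has |x'(t)| ≤ β for all t ∈ ℝ. -/
/-!
The energy `E = (1 - x'²)^(-1/2) + x²/2` of the relativistic oscillator is conserved: along a
solution `d/dt (1 - x'²)^(-1/2) = x' x'' (1 - x'²)^(-3/2) = -x x'`. Since `x(0) = 0`, the Lorentz
factor of `x'(t)` is at most that of `x'(0) = β`, and the Lorentz factor is increasing in `|v|`.
-/

open Real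

noncomputable def lorentzFactor (v : ℝ) : ℝ := (1 - v ^ 2) ^ (-(1 : ℝ) / 2)

lemma one_sub_sq_pos_of_abs_lt_one {v : ℝ} (hv : |v| < 1) : 0 < 1 - v ^ 2 := by
  have := (sq_lt_one_iff_abs_lt_one v).mpr hv
  linarith

lemma lorentzFactor_le_lorentzFactor_iff {a b : ℝ} (ha : |a| < 1) (hb : |b| < 1) :
    lorentzFactor a ≤ lorentzFactor b ↔ |a| ≤ |b| := by
  rw [lorentzFactor, lorentzFactor, rpow_le_rpow_iff_of_neg (one_sub_sq_pos_of_abs_lt_one ha)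
    (one_sub_sq_pos_of_abs_lt_one hb) (by norm_num), ← sq_le_sq]
  constructor <;> intro h <;> linarith

lemma HasDerivAt.lorentzFactor {v : ℝ → ℝ} {v' t : ℝ} (hv : HasDerivAt v v' t)
    (hvt : |v t| < 1) :
    HasDerivAt (fun s => lorentzFactor (v s)) (v t * v' * (1 - v t ^ 2) ^ (-(3 : ℝ) / 2)) t := by
  have hpos := one_sub_sq_pos_of_abs_lt_one hvt
  refine (((hv.pow 2).const_sub 1).rpow_const (p := -(1 : ℝ) / 2) (Or.inl hpos.ne')).congr_deriv ?_
  rw [show -(1 : ℝ) / 2 - 1 = -(3 : ℝ) / 2 by norm_num]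
  simp only [Pi.pow_apply]
  push_cast
  ring

lemma relativistic_oscillator_energy_eq {x : ℝ → ℝ}
    (hdiff : ∀ t, DifferentiableAt ℝ x t ∧ DifferentiableAt ℝ (deriv x) t)
    (hv : ∀ t, |deriv x t| < 1)
    (heq : ∀ t, deriv (deriv x) t + (1 - (deriv x t) ^ 2) ^ ((3 : ℝ) / 2) * x t = 0) (t : ℝ) :
    lorentzFactor (deriv x t) + x t ^ 2 / 2 = lorentzFactor (deriv x 0) + x 0 ^ 2 / 2 := by
  have hE : ∀ s, HasDerivAt (fun u => lorentzFactor (deriv x u) + x u ^ 2 / 2) 0 s := by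
    intro s
    have hpos := one_sub_sq_pos_of_abs_lt_one (hv s)
    have hacc : deriv (deriv x) s = -((1 - deriv x s ^ 2) ^ ((3 : ℝ) / 2) * x s) := by
      linarith [heq s]
    have hcancel : (1 - deriv x s ^ 2) ^ ((3 : ℝ) / 2) * (1 - deriv x s ^ 2) ^ (-(3 : ℝ) / 2) = 1 := by
      rw [← rpow_add hpos]
      norm_num
    refine (((hdiff s).2.hasDerivAt.lorentzFactor (hv s)).add
      (((hdiff s).1.hasDerivAt.pow 2).div_const 2)).congr_deriv ?_
    rw [hacc]
    push_cast
    linear_combination (-(deriv x s * x s)) * hcancel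
  exact is_const_of_deriv_eq_zero (fun s => (hE s).differentiableAt) (fun s => (hE s).deriv) t 0

theorem stmt_14_general (β : ℝ) (hβ0 : 0 < β) (x : ℝ → ℝ)
    (hdiff : ∀ t, DifferentiableAt ℝ x t ∧ DifferentiableAt ℝ (deriv x) t)
    (hv : ∀ t, |deriv x t| < 1)
    (heq : ∀ t, deriv (deriv x) t + (1 - (deriv x t) ^ 2) ^ ((3 : ℝ) / 2) * x t = 0)
    (h0 : x 0 = 0) (h0' : deriv x 0 = β) (t : ℝ) :
    |deriv x t| ≤ β := by
  have henergy := relativistic_oscillator_energy_eq hdiff hv heq t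
  rw [h0, h0'] at henergy
  have hle : lorentzFactor (deriv x t) ≤ lorentzFactor β := by
    nlinarith [sq_nonneg (x t)]
  have hβ : |β| < 1 := h0' ▸ hv 0
  simpa [abs_of_pos hβ0] using (lorentzFactor_le_lorentzFactor_iff (hv t) hβ).mp hle

theorem stmt_14 (β : ℝ) (hβ0 : 0 < β) (hβ1 : β < 1) (x : ℝ → ℝ)
    (hdiff : ∀ t, DifferentiableAt ℝ x t ∧ DifferentiableAt ℝ (deriv x) t)
    (hv : ∀ t, |deriv x t| < 1)
    (heq : ∀ t, deriv (deriv x) t + (1 - (deriv x t) ^ 2) ^ ((3 : ℝ) / 2) * x t = 0)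
    (h0 : x 0 = 0) (h0' : deriv x 0 = β) (t : ℝ) :
    |deriv x t| ≤ β :=
  stmt_14_general β hβ0 x hdiff hv heq h0 h0' t
end
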